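/- Let (E,F) be a uniformly self-similar ends space and let H₁, H₂ be half-spaces of (E,F). Then there exists φ ∈ Homeo(E,F) with φ(H₁) = H₂; that is, any two half-spaces are related by an ambient homeomorphism of (E,F). -/

import Mathlib

section EndsSpace

variable {E : Type*} [TopologicalSpace E]

/-- A homeomorphism of pairs from `(A, A ∩ F)` to `(B, B ∩ F)`:
a homeomorphism of the subspaces `A → B` carrying `A ∩ F` onto `B ∩ F`. -/
def PairHomeo (F A B : Set E) : Prop :=
  ∃ h : A ≃ₜ B, ∀ x : A, ((h x : E) ∈ F ↔ (x : E) ∈ F)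

/-- `(E, F)` is self-similar: every partition of `E` into finitely many pairwise
disjoint nonempty clopen sets has a piece containing a clopen set `D` with
`(D, D ∩ F)` homeomorphic (as a pair) to `(E, F)`. -/
def SelfSimilarPair (F : Set E) : Prop :=
  ∀ (n : ℕ) (P : Fin n → Set E),
    (∀ i, IsClopen (P i)) → (∀ i, (P i).Nonempty) →
    Pairwise (Function.onFun Disjoint P) → (⋃ i, P i) = Set.univ →
    ∃ i, ∃ D : Set E, IsClopen D ∧ D ⊆ P i ∧ PairHomeo F D Set.univ

/-- The preorder `x ≼ y` on ends: every clopen neighborhood `U` of `y` contains a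
clopen set `D` for which there are a clopen neighborhood `V` of `x` and a
homeomorphism of pairs `(V, V ∩ F) → (D, D ∩ F)`. -/
def EndsLE (F : Set E) (x y : E) : Prop :=
  ∀ U : Set E, IsClopen U → y ∈ U →
    ∃ D : Set E, D ⊆ U ∧ IsClopen D ∧
      ∃ V : Set E, IsClopen V ∧ x ∈ V ∧ PairHomeo F V D

/-- The equivalence `x ∼ y`: `x ≼ y` and `y ≼ x`. -/
def EndsEquiv (F : Set E) (x y : E) : Prop := EndsLE F x y ∧ EndsLE F y x

/-- `x` is a maximal end. -/
def MaximalEnd (F : Set E) (x : E) : Prop := ∀ y, EndsLE F x y → EndsLE F y x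

/-- `M(E)`, the set of maximal ends. -/
def MaxSet (F : Set E) : Set E := {x | MaximalEnd F x}

/-- `(E, F)` is uniformly self-similar: it is self-similar, `M(E)` is a single
`∼`-equivalence class, and `M(E)` is homeomorphic to the Cantor space `ℕ → Bool`. -/
def UniformlySelfSimilar (F : Set E) : Prop :=
  SelfSimilarPair F ∧
  (∃ x, MaxSet F = {y | EndsEquiv F x y}) ∧
  Nonempty (↥(MaxSet F) ≃ₜ (ℕ → Bool))

/-- The group `Homeo(E,F)` of homeomorphisms of `E` preserving `F`,
as a subgroup of the permutation group of `E`. -/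
def EndsHomeo (F : Set E) : Subgroup (Equiv.Perm E) where
  carrier := {h | Continuous h ∧ Continuous h.symm ∧ ∀ x, h x ∈ F ↔ x ∈ F}
  one_mem' := ⟨continuous_id, continuous_id, fun _ => Iff.rfl⟩
  mul_mem' := by
    rintro a b ⟨ha1, ha2, ha3⟩ ⟨hb1, hb2, hb3⟩
    refine ⟨?_, ?_, fun x => ?_⟩
    · exact ha1.comp hb1
    · exact hb2.comp ha2
    · exact (ha3 (b x)).trans (hb3 x)
  inv_mem' := by
    rintro a ⟨ha1, ha2, ha3⟩
    refine ⟨ha2, ha1, fun x => ?_⟩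
    have h := ha3 (a⁻¹ x)
    rw [← Equiv.Perm.mul_apply, mul_inv_cancel, Equiv.Perm.one_apply] at h
    exact h.symm

/-- A half-space of `(E,F)`: a clopen set meeting `M(E)` in a nonempty proper subset. -/
def IsHalfSpace (F H : Set E) : Prop :=
  IsClopen H ∧ (H ∩ MaxSet F).Nonempty ∧ H ∩ MaxSet F ⊂ MaxSet F

/-- `φ` is an `H`-translation: the sets `φⁿ(H)`, `n ∈ ℤ`, are pairwise disjoint. -/
def IsHTranslation (H : Set E) (φ : Equiv.Perm E) : Prop :=
  ∀ m n : ℤ, m ≠ n → Disjoint ((φ ^ m) '' H) ((φ ^ n) '' H)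

/-- A homeomorphism is supported on `H` if it fixes every point outside `H`. -/
def SupportedOn (H : Set E) (h : Equiv.Perm E) : Prop := ∀ x ∉ H, h x = x

end EndsSpace


/-!
Every clopen set `U` containing a maximal end `x` is homeomorphic, as a pair, to `(E, F)`.
Indeed some point has clopen copies of `(E, F)` in each of its neighbourhoods (self-similarity
and compactness), hence so does every maximal end; using a second maximal end these copies can
be taken to avoid `x`. Choosing disjoint copies `B₀, B₁, …` of `Uᶜ` inside `U` that converge to
`x`, the map sending `Uᶜ` onto `B₀` and each `Bₙ` onto `Bₙ₊₁` while fixing everything else is a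
homeomorphism of pairs from `E` onto `U`. A half-space `H` and its complement both contain
maximal ends, so `H₁ ≅ E ≅ H₂` and `H₁ᶜ ≅ E ≅ H₂ᶜ`, and these glue to the required element of
`Homeo(E, F)`.
-/

open Set Filter Function Topology Set.Notation

section Pairs

variable {X : Type*} [TopologicalSpace X] {F : Set X}

namespace PairHomeo

theorem refl (F A : Set X) : PairHomeo F A A :=
  ⟨Homeomorph.refl A, fun _ => Iff.rfl⟩

theorem symm {A B : Set X} (h : PairHomeo F A B) : PairHomeo F B A := by
  obtain ⟨e, he⟩ := h
  exact ⟨e.symm, fun b => by simpa using (he (e.symm b)).symm⟩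

theorem trans {A B C : Set X} (h₁ : PairHomeo F A B) (h₂ : PairHomeo F B C) :
    PairHomeo F A C := by
  obtain ⟨e₁, he₁⟩ := h₁
  obtain ⟨e₂, he₂⟩ := h₂
  exact ⟨e₁.trans e₂, fun a => (he₂ (e₁ a)).trans (he₁ a)⟩

theorem range_of_isEmbedding {Y : Type*} [TopologicalSpace Y] {A : Set X} {f : Y → X}
    (hf : IsEmbedding f) (e : Y ≃ₜ A) (hF : ∀ y, f y ∈ F ↔ (e y : X) ∈ F) :
    PairHomeo F A (range f) :=
  ⟨e.symm.trans hf.toHomeomorph, fun a => by simpa using hF (e.symm a)⟩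

end PairHomeo

theorem exists_clopen_pairHomeo_preimage {A B C : Set X} (e : A ≃ₜ B)
    (he : ∀ a, (e a : X) ∈ F ↔ (a : X) ∈ F) (hCB : C ⊆ B) (hA : IsClopen A) (hC : IsClopen C) :
    ∃ C' ⊆ A, IsClopen C' ∧ PairHomeo F C C' ∧ ∀ a : A, (a : X) ∈ C' → (e a : X) ∈ C := by
  set f : C → X := fun c => e.symm (inclusion hCB c)
  have hCB' : IsClopen (B ↓∩ C) := hC.preimage continuous_subtype_val
  have hopen : IsOpenEmbedding f := hA.isOpen.isOpenEmbedding_subtypeVal.comp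
    (e.symm.isOpenEmbedding.comp (.inclusion hCB hCB'.isOpen))
  have hclosed : IsClosedEmbedding f := hA.isClosed.isClosedEmbedding_subtypeVal.comp
    (e.symm.isClosedEmbedding.comp (.inclusion hCB hCB'.isClosed))
  refine ⟨range f, ?_, ⟨hclosed.isClosed_range, hopen.isOpen_range⟩,
    PairHomeo.range_of_isEmbedding hopen.isEmbedding (Homeomorph.refl C) fun c => ?_, ?_⟩
  · rintro _ ⟨c, rfl⟩
    exact (e.symm _).2
  · simpa using (he (e.symm (inclusion hCB c))).symm
  · rintro a ⟨c, hc⟩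
    rw [← Subtype.ext hc, Homeomorph.apply_symm_apply]
    exact c.2

theorem PairHomeo.exists_clopen_subset {A B C : Set X} (h : PairHomeo F A B) (hCA : C ⊆ A)
    (hB : IsClopen B) (hC : IsClopen C) : ∃ C' ⊆ B, IsClopen C' ∧ PairHomeo F C C' := by
  obtain ⟨e, he⟩ := h.symm
  obtain ⟨C', hC'B, hC', hCC', -⟩ := exists_clopen_pairHomeo_preimage e he hCA hB hC
  exact ⟨C', hC'B, hC', hCC'⟩

end Pairs

section SelfSimilar

variable {X : Type*} [TopologicalSpace X] {F : Set X}

theorem SelfSimilarPair.exists_of_partition (hss : SelfSimilarPair F) {ι : Type*} [Finite ι]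
    (P : ι → Set X) (hP : ∀ i, IsClopen (P i)) (hne : ∀ i, (P i).Nonempty)
    (hdisj : Pairwise (Disjoint on P)) (hcover : ⋃ i, P i = univ) :
    ∃ i, ∃ D ⊆ P i, IsClopen D ∧ PairHomeo F D univ := by
  obtain ⟨n, ⟨e⟩⟩ := Finite.exists_equiv_fin ι
  obtain ⟨i, D, hD, hDP, hDE⟩ := hss n (P ∘ e.symm) (fun _ => hP _) (fun _ => hne _)
    (hdisj.comp_of_injective e.symm.injective) ((e.symm.surjective.iUnion_comp P).trans hcover)
  exact ⟨e.symm i, D, hDP, hD, hDE⟩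

theorem SelfSimilarPair.exists_of_cover (hss : SelfSimilarPair F) {ι : Type*} [Finite ι]
    (P : ι → Set X) (hP : ∀ i, IsClopen (P i)) (hcover : ⋃ i, P i = univ) :
    ∃ i, ∃ D ⊆ P i, IsClopen D ∧ PairHomeo F D univ := by
  let atom : Set ι → Set X := fun S => {x | {i | x ∈ P i} = S}
  have hatom : ∀ S, atom S = ⋂ i, {x | x ∈ P i ↔ i ∈ S} := fun S => by
    ext x
    simp [atom, Set.ext_iff]
  have hclopen : ∀ S, IsClopen (atom S) := fun S => by
    rw [hatom]
    refine isClopen_iInter_of_finite fun i => ?_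
    by_cases hi : i ∈ S
    · simpa [hi] using hP i
    · simp only [hi, iff_false]
      exact (hP i).compl
  obtain ⟨⟨S, x, hx⟩, D, hDS, hD, hDE⟩ :=
    hss.exists_of_partition (fun S : {S // (atom S).Nonempty} => atom S.1) (fun _ => hclopen _)
      (fun S => S.2) (fun S T hST => disjoint_left.2 fun y hyS hyT => hST (Subtype.ext
        (hyS.symm.trans hyT))) (eq_univ_of_forall fun y => mem_iUnion.2 ⟨⟨_, y, rfl⟩, rfl⟩)
  obtain ⟨i, hi⟩ := mem_iUnion.1 (hcover.symm ▸ mem_univ x : x ∈ ⋃ i, P i)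
  refine ⟨i, D, fun y hy => ?_, hD, hDE⟩
  have hyx : {j | y ∈ P j} = {j | x ∈ P j} := (hDS hy).trans hx.symm
  exact (Set.ext_iff.1 hyx i).2 hi

def HasNearbyCopies (F : Set X) (x : X) : Prop :=
  ∀ U, IsClopen U → x ∈ U → ∃ D ⊆ U, IsClopen D ∧ PairHomeo F D univ

theorem HasNearbyCopies.endsLE {x : X} (hx : HasNearbyCopies F x) (y : X) : EndsLE F y x := by
  intro U hU hxU
  obtain ⟨D, hDU, hD, hDE⟩ := hx U hU hxU
  exact ⟨D, hDU, hD, univ, isClopen_univ, mem_univ y, hDE.symm⟩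

theorem SelfSimilarPair.exists_hasNearbyCopies [CompactSpace X] (hss : SelfSimilarPair F) :
    ∃ x, HasNearbyCopies F x := by
  by_contra! h
  simp only [HasNearbyCopies, not_forall, not_exists, not_and] at h
  choose U hU hxU hno using h
  obtain ⟨t, ht⟩ := isCompact_univ.elim_finite_subcover U (fun x => (hU x).isOpen)
    fun x _ => mem_iUnion.2 ⟨x, hxU x⟩
  obtain ⟨⟨x, _⟩, D, hDU, hD, hDE⟩ := hss.exists_of_cover (fun x : t => U x) (fun _ => hU _)
    (eq_univ_of_forall fun y => by
      obtain ⟨x, hx, hy⟩ := mem_iUnion₂.1 (ht (mem_univ y))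
      exact mem_iUnion.2 ⟨⟨x, hx⟩, hy⟩)
  exact hno x D hDU hD hDE

/-- A maximal end lies above a point with nearby copies, since everything lies below such a
point. -/
theorem MaximalEnd.hasNearbyCopies [CompactSpace X] (hss : SelfSimilarPair F) {x : X}
    (hx : MaximalEnd F x) : HasNearbyCopies F x := by
  obtain ⟨z, hz⟩ := hss.exists_hasNearbyCopies
  intro U hU hxU
  obtain ⟨D, hDU, hD, V, hV, hzV, hVD⟩ := hx z (hz.endsLE x) U hU hxU
  obtain ⟨D₀, hD₀V, hD₀, hD₀E⟩ := hz V hV hzV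
  obtain ⟨D', hD'D, hD', hD₀D'⟩ := hVD.exists_clopen_subset hD₀V hD hD₀
  exact ⟨D', hD'D.trans hDU, hD', hD₀D'.symm.trans hD₀E⟩

end SelfSimilar

section Avoiding

variable {X : Type*} [TopologicalSpace X] [CompactSpace X] [T2Space X]
  [TotallyDisconnectedSpace X] {F : Set X}

/-- If a copy `D ≅ E` contains `x`, pull back a copy of `E` that avoids the point
corresponding to `x`; such a copy sits near any maximal end other than that point. -/
theorem MaximalEnd.exists_copy_subset_notMem (hss : SelfSimilarPair F)
    (hM : (MaxSet F).Nontrivial) {x : X} (hx : MaximalEnd F x) {W : Set X} (hW : IsClopen W)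
    (hxW : x ∈ W) : ∃ D ⊆ W, IsClopen D ∧ x ∉ D ∧ PairHomeo F D univ := by
  obtain ⟨D, hDW, hD, e, he⟩ := hx.hasNearbyCopies hss W hW hxW
  by_cases hxD : x ∉ D
  · exact ⟨D, hDW, hD, hxD, e, he⟩
  rw [not_not] at hxD
  set p : X := (e ⟨x, hxD⟩ : X)
  obtain ⟨m, hm, hmp⟩ := hM.exists_ne p
  obtain ⟨Q, ⟨hmQ, hQ⟩, hQp⟩ :=
    (nhds_basis_clopen m).mem_iff.1 (isOpen_compl_singleton.mem_nhds hmp)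
  obtain ⟨D₀, hD₀Q, hD₀, hD₀E⟩ := MaximalEnd.hasNearbyCopies hss hm Q hQ hmQ
  obtain ⟨D', hD'D, hD', hD₀D', hD'D₀⟩ :=
    exists_clopen_pairHomeo_preimage e he (subset_univ D₀) hD hD₀
  exact ⟨D', hD'D.trans hDW, hD', fun hxD' => hQp (hD₀Q (hD'D₀ ⟨x, hxD⟩ hxD')) rfl,
    hD₀D'.symm.trans hD₀E⟩

theorem MaximalEnd.exists_pairHomeo_subset_notMem (hss : SelfSimilarPair F)
    (hM : (MaxSet F).Nontrivial) {x : X} (hx : MaximalEnd F x) {W : Set X} (hW : IsClopen W)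
    (hxW : x ∈ W) {A : Set X} (hA : IsClopen A) :
    ∃ B ⊆ W, IsClopen B ∧ x ∉ B ∧ PairHomeo F A B := by
  obtain ⟨D, hDW, hD, hxD, hDE⟩ := hx.exists_copy_subset_notMem hss hM hW hxW
  obtain ⟨B, hBD, hB, hAB⟩ := hDE.symm.exists_clopen_subset (subset_univ A) hD hA
  exact ⟨B, hBD.trans hDW, hB, fun hxB => hxD (hBD hxB), hAB⟩

end Avoiding

theorem exists_pairwise_disjoint_tendsto_smallSets {X : Type*} [TopologicalSpace X] {x : X}
    [(𝓝 x).IsCountablyGenerated] (hbasis : (𝓝 x).HasBasis (fun s => x ∈ s ∧ IsClopen s) id)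
    {P : Set X → Prop} (hP : ∀ W, IsClopen W → x ∈ W → ∃ B ⊆ W, IsClopen B ∧ x ∉ B ∧ P B) :
    ∃ B : ℕ → Set X, Pairwise (Disjoint on B) ∧ (∀ n, IsClopen (B n) ∧ x ∉ B n ∧ P (B n)) ∧
      Tendsto B atTop (𝓝 x).smallSets := by
  obtain ⟨V, hV, hVbasis⟩ := hbasis.exists_antitone_subbasis
  choose! b hbW hb hxb hPb using hP
  -- `W (n + 1)` is a clopen neighbourhood of `x` inside `V n` avoiding `b (W 0), …, b (W n)`
  let W : ℕ → Set X := fun n => Nat.rec univ (fun n Wn => (Wn \ b Wn) ∩ V n) n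
  have hW : ∀ n, IsClopen (W n) ∧ x ∈ W n := by
    intro n
    induction n with
    | zero => exact ⟨isClopen_univ, mem_univ x⟩
    | succ n ih =>
      exact ⟨(ih.1.diff (hb _ ih.1 ih.2)).inter (hV n).2, ⟨ih.2, hxb _ ih.1 ih.2⟩, (hV n).1⟩
  have hWsucc : ∀ n, W (n + 1) = (W n \ b (W n)) ∩ V n := fun n => rfl
  have hWanti : Antitone W := antitone_nat_of_succ_le fun n y hy => ((hWsucc n ▸ hy).1).1
  refine ⟨fun n => b (W n), (pairwise_disjoint_on _).2 fun m n hmn => ?_,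
    fun n => ⟨hb _ (hW n).1 (hW n).2, hxb _ (hW n).1 (hW n).2, hPb _ (hW n).1 (hW n).2⟩, ?_⟩
  · refine disjoint_left.2 fun y hym hyn => ?_
    have hy : y ∈ W (m + 1) := hWanti hmn (hbW _ (hW n).1 (hW n).2 hyn)
    exact (hWsucc m ▸ hy).1.2 hym
  · refine tendsto_smallSets_iff.2 fun s hs => ?_
    obtain ⟨k, -, hk⟩ := hVbasis.toHasBasis.mem_iff.1 hs
    filter_upwards [eventually_gt_atTop k] with n hn
    exact (hbW _ (hW n).1 (hW n).2).trans ((hWanti hn).trans fun y hy => hk (hWsucc k ▸ hy).2)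

section Shift

variable {X : Type*} [TopologicalSpace X] {C : ℕ → Set X}

open Classical in
noncomputable def shiftAlong (e : ∀ n, C n ≃ₜ C (n + 1)) (y : X) : X :=
  if h : ∃ n, y ∈ C n then e (Nat.find h) ⟨y, Nat.find_spec h⟩ else y

variable (e : ∀ n, C n ≃ₜ C (n + 1))

theorem shiftAlong_of_mem (hC : Pairwise (Disjoint on C)) {n : ℕ} {y : X} (hy : y ∈ C n) :
    shiftAlong e y = e n ⟨y, hy⟩ := by
  have key : ∀ m (hm : y ∈ C m), (e m ⟨y, hm⟩ : X) = e n ⟨y, hy⟩ := fun m hm => by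
    obtain rfl : m = n := by_contra fun hne => disjoint_left.1 (hC hne) hm hy
    rfl
  rw [shiftAlong, dif_pos ⟨n, hy⟩]
  exact key _ _

theorem shiftAlong_of_forall_notMem {y : X} (hy : ∀ n, y ∉ C n) : shiftAlong e y = y := by
  simp only [shiftAlong, dif_neg (not_exists.2 hy)]

theorem shiftAlong_mem_succ_iff (hC : Pairwise (Disjoint on C)) {n : ℕ} {y : X} :
    shiftAlong e y ∈ C (n + 1) ↔ y ∈ C n := by
  refine ⟨fun h => ?_, fun hy => shiftAlong_of_mem e hC hy ▸ (e n _).2⟩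
  by_cases hy : ∃ m, y ∈ C m
  · obtain ⟨m, hm⟩ := hy
    obtain rfl : m = n := by
      by_contra hne
      exact disjoint_left.1 (hC (by omega : m + 1 ≠ n + 1))
        (shiftAlong_of_mem e hC hm ▸ (e m _).2) h
    exact hm
  · rw [shiftAlong_of_forall_notMem e (not_exists.1 hy)] at h
    exact absurd ⟨n + 1, h⟩ hy

theorem shiftAlong_notMem_zero (hC : Pairwise (Disjoint on C)) (y : X) :
    shiftAlong e y ∉ C 0 := by
  by_cases hy : ∃ n, y ∈ C n
  · obtain ⟨n, hn⟩ := hy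
    exact disjoint_right.1 (hC (by omega : 0 ≠ n + 1)) ((shiftAlong_mem_succ_iff e hC).2 hn)
  · rw [shiftAlong_of_forall_notMem e (not_exists.1 hy)]
    exact fun h => hy ⟨0, h⟩

theorem shiftAlong_injective (hC : Pairwise (Disjoint on C)) : Injective (shiftAlong e) := by
  intro y₁ y₂ h
  by_cases hy₁ : ∃ n, y₁ ∈ C n
  · obtain ⟨n, hn₁⟩ := hy₁
    have hn₂ : y₂ ∈ C n :=
      (shiftAlong_mem_succ_iff e hC).1 (h ▸ (shiftAlong_mem_succ_iff e hC).2 hn₁)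
    rw [shiftAlong_of_mem e hC hn₁, shiftAlong_of_mem e hC hn₂] at h
    exact congrArg Subtype.val ((e n).injective (Subtype.ext h))
  · have hy₂ : ∀ n, y₂ ∉ C n := fun n hn₂ =>
      hy₁ ⟨n, (shiftAlong_mem_succ_iff e hC).1 (h ▸ (shiftAlong_mem_succ_iff e hC).2 hn₂)⟩
    rwa [shiftAlong_of_forall_notMem e (not_exists.1 hy₁), shiftAlong_of_forall_notMem e hy₂] at h

theorem range_shiftAlong (hC : Pairwise (Disjoint on C)) : range (shiftAlong e) = (C 0)ᶜ := by
  refine Subset.antisymm (range_subset_iff.2 (shiftAlong_notMem_zero e hC)) fun z hz => ?_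
  by_cases h : ∃ n, z ∈ C n
  · obtain ⟨_ | n, hn⟩ := h
    · exact absurd hn hz
    · refine ⟨(e n).symm ⟨z, hn⟩, ?_⟩
      rw [shiftAlong_of_mem e hC ((e n).symm ⟨z, hn⟩).2]
      simp
  · exact ⟨z, shiftAlong_of_forall_notMem e (not_exists.1 h)⟩

theorem shiftAlong_mem_iff (hC : Pairwise (Disjoint on C)) {S : Set X}
    (he : ∀ n c, (e n c : X) ∈ S ↔ (c : X) ∈ S) (y : X) : shiftAlong e y ∈ S ↔ y ∈ S := by
  by_cases hy : ∃ n, y ∈ C n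
  · obtain ⟨n, hn⟩ := hy
    rw [shiftAlong_of_mem e hC hn]
    exact he n _
  · rw [shiftAlong_of_forall_notMem e (not_exists.1 hy)]

theorem eventually_forall_lt_notMem (hCc : ∀ n, IsClosed (C n)) {y : X} (hy : ∀ n, y ∉ C n)
    (N : ℕ) : ∀ᶠ z in 𝓝 y, ∀ n < N, z ∉ C n :=
  (eventually_all_finite (finite_Iio N)).2 fun n _ => (hCc n).isOpen_compl.mem_nhds (hy n)

/-- Near the limit point `x` the pieces are mapped to pieces still closer to `x`; near any other
point outside the pieces the map is the identity. -/
theorem continuous_shiftAlong [T2Space X] (hC : Pairwise (Disjoint on C))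
    (hCc : ∀ n, IsClopen (C n)) {x : X} (hx : ∀ n, x ∉ C n)
    (hlim : Tendsto C atTop (𝓝 x).smallSets) : Continuous (shiftAlong e) := by
  refine continuous_iff_continuousAt.2 fun y => ?_
  by_cases hy : ∃ n, y ∈ C n
  · obtain ⟨n, hn⟩ := hy
    have : ContinuousOn (shiftAlong e) (C n) := by
      rw [continuousOn_iff_continuous_domRestrict]
      have hres : (C n).domRestrict (shiftAlong e) = fun c => (e n c : X) :=
        funext fun c => shiftAlong_of_mem e hC c.2
      rw [hres]
      exact continuous_subtype_val.comp (e n).continuous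
    exact this.continuousAt ((hCc n).isOpen.mem_nhds hn)
  rw [not_exists] at hy
  by_cases hyx : y = x
  · subst hyx
    rw [ContinuousAt, shiftAlong_of_forall_notMem e hy]
    refine tendsto_def.2 fun s hs => ?_
    obtain ⟨N, hN⟩ := eventually_atTop.1 (tendsto_smallSets_iff.1 hlim s hs)
    filter_upwards [hs, eventually_forall_lt_notMem (fun n => (hCc n).isClosed) hy N]
      with z hzs hzN
    by_cases hz : ∃ n, z ∈ C n
    · obtain ⟨n, hn⟩ := hz
      exact hN (n + 1) (by grind) ((shiftAlong_mem_succ_iff e hC).2 hn)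
    · rwa [mem_preimage, shiftAlong_of_forall_notMem e (not_exists.1 hz)]
  · obtain ⟨u, hu, v, hv, huv⟩ := Filter.disjoint_iff.1 (disjoint_nhds_nhds.2 hyx)
    obtain ⟨N, hN⟩ := eventually_atTop.1 (tendsto_smallSets_iff.1 hlim v hv)
    have hid : shiftAlong e =ᶠ[𝓝 y] id := by
      filter_upwards [hu, eventually_forall_lt_notMem (fun n => (hCc n).isClosed) hy N]
        with z hzu hzN
      refine shiftAlong_of_forall_notMem e fun n hn => ?_
      by_cases hnN : n < N
      · exact hzN n hnN hn
      · exact disjoint_left.1 huv hzu (hN n (not_lt.1 hnN) hn)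
    exact continuousAt_id.congr hid.symm

theorem pairHomeo_compl_zero_univ [CompactSpace X] [T2Space X] {F : Set X}
    (hC : Pairwise (Disjoint on C)) (hCc : ∀ n, IsClopen (C n)) {x : X} (hx : ∀ n, x ∉ C n)
    (hlim : Tendsto C atTop (𝓝 x).smallSets) (he : ∀ n c, (e n c : X) ∈ F ↔ (c : X) ∈ F) :
    PairHomeo F (C 0)ᶜ univ := by
  have hemb : IsEmbedding (shiftAlong e) :=
    ((continuous_shiftAlong e hC hCc hx hlim).isClosedEmbedding
      (shiftAlong_injective e hC)).isEmbedding
  have h := PairHomeo.range_of_isEmbedding hemb (Homeomorph.Set.univ X).symm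
    fun y => shiftAlong_mem_iff e hC he y
  rw [range_shiftAlong e hC] at h
  exact h.symm

end Shift

section Absorption

variable {X : Type*} [TopologicalSpace X] [CompactSpace X] [T2Space X]
  [TotallyDisconnectedSpace X] [FirstCountableTopology X] {F : Set X}

theorem MaximalEnd.pairHomeo_univ (hss : SelfSimilarPair F) (hM : (MaxSet F).Nontrivial)
    {x : X} (hx : MaximalEnd F x) {U : Set X} (hU : IsClopen U) (hxU : x ∈ U) :
    PairHomeo F U univ := by
  obtain ⟨B, hBdisj, hB, hlim⟩ := exists_pairwise_disjoint_tendsto_smallSets (nhds_basis_clopen x)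
    (P := fun B => B ⊆ U ∧ PairHomeo F Uᶜ B) fun W hW hxW => by
      obtain ⟨B, hBW, hB, hxB, hUB⟩ :=
        hx.exists_pairHomeo_subset_notMem hss hM (hW.inter hU) ⟨hxW, hxU⟩ hU.compl
      exact ⟨B, hBW.trans inter_subset_left, hB, hxB, hBW.trans inter_subset_right, hUB⟩
  let C : ℕ → Set X := fun n => Nat.casesOn n Uᶜ B
  have hCcopy : ∀ n, PairHomeo F Uᶜ (C n)
    | 0 => PairHomeo.refl F Uᶜ
    | n + 1 => (hB n).2.2.2
  have hCdisj : Pairwise (Disjoint on C) := (pairwise_disjoint_on C).2 fun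
    | 0, n + 1, _ => disjoint_compl_left_iff_subset.2 (hB n).2.2.1
    | m + 1, n + 1, hmn => hBdisj (by omega)
  choose e he using fun n => (hCcopy n).symm.trans (hCcopy (n + 1))
  have h := pairHomeo_compl_zero_univ e hCdisj (x := x)
    (fun | 0 => hU.compl | n + 1 => (hB n).1)
    (fun | 0 => not_not.2 hxU | n + 1 => (hB n).2.1)
    ((tendsto_add_atTop_iff_nat 1).1 hlim) he
  rwa [show (C 0)ᶜ = U from compl_compl U] at h

theorem IsHalfSpace.pairHomeo_univ (hss : SelfSimilarPair F) {H : Set X}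
    (hH : IsHalfSpace F H) : PairHomeo F H univ ∧ PairHomeo F Hᶜ univ := by
  obtain ⟨hH, ⟨x, hxH, hx⟩, hsub⟩ := hH
  obtain ⟨y, hy, hyH⟩ := exists_of_ssubset hsub
  have hM : (MaxSet F).Nontrivial := ⟨x, hx, y, hy, fun h => hyH ⟨h ▸ hxH, hy⟩⟩
  exact ⟨MaximalEnd.pairHomeo_univ hss hM hx hH hxH,
    MaximalEnd.pairHomeo_univ hss hM hy hH.compl fun h => hyH ⟨h, hy⟩⟩

end Absorption

section Gluing

variable {X : Type*} [TopologicalSpace X] {F : Set X}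

def Homeomorph.sumComplOfIsClopen {s : Set X} [DecidablePred (· ∈ s)] (hs : IsClopen s) :
    s ⊕ (sᶜ : Set X) ≃ₜ X :=
  (Equiv.Set.sumCompl s).toHomeomorphOfContinuousOpen
    (continuous_sum_dom.2 ⟨continuous_subtype_val, continuous_subtype_val⟩)
    (isOpenMap_sum.2 ⟨hs.isOpen.isOpenMap_subtype_val, hs.compl.isOpen.isOpenMap_subtype_val⟩)

theorem exists_mem_endsHomeo_image_eq {H₁ H₂ : Set X} (hH₁ : IsClopen H₁) (hH₂ : IsClopen H₂)
    (h : PairHomeo F H₁ H₂) (hc : PairHomeo F H₁ᶜ H₂ᶜ) :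
    ∃ φ ∈ EndsHomeo F, (φ : Equiv.Perm X) '' H₁ = H₂ := by
  classical
  obtain ⟨e, he⟩ := h
  obtain ⟨f, hf⟩ := hc
  let φ : X ≃ₜ X := (Homeomorph.sumComplOfIsClopen hH₁).symm.trans
    ((e.sumCongr f).trans (Homeomorph.sumComplOfIsClopen hH₂))
  have hφ₁ : ∀ y (hy : y ∈ H₁), φ y = e ⟨y, hy⟩ := fun y hy => by
    simp only [φ, Homeomorph.sumComplOfIsClopen, Homeomorph.trans_apply,
      Equiv.toHomeomorphOfContinuousOpen_symm_apply, Equiv.toHomeomorphOfContinuousOpen_apply,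
      Equiv.Set.sumCompl_symm_apply_of_mem hy]
    rfl
  have hφ₂ : ∀ y (hy : y ∉ H₁), φ y = f ⟨y, hy⟩ := fun y hy => by
    simp only [φ, Homeomorph.sumComplOfIsClopen, Homeomorph.trans_apply,
      Equiv.toHomeomorphOfContinuousOpen_symm_apply, Equiv.toHomeomorphOfContinuousOpen_apply,
      Equiv.Set.sumCompl_symm_apply_of_notMem hy]
    rfl
  have hφ : ∀ y, (φ y ∈ F ↔ y ∈ F) ∧ (φ y ∈ H₂ ↔ y ∈ H₁) := fun y => by
    by_cases hy : y ∈ H₁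
    · rw [hφ₁ y hy]
      exact ⟨he _, iff_of_true (e _).2 hy⟩
    · rw [hφ₂ y hy]
      exact ⟨hf _, iff_of_false (f _).2 hy⟩
  refine ⟨φ.toEquiv, ⟨φ.continuous, φ.symm.continuous, fun y => (hφ y).1⟩, ?_⟩
  ext z
  obtain ⟨y, rfl⟩ := φ.surjective z
  simpa [φ.injective.mem_set_image] using (hφ y).2.symm

end Gluing

variable {E : Type*} [TopologicalSpace E] [Nonempty E] [CompactSpace E]
  [TopologicalSpace.MetrizableSpace E] [TotallyDisconnectedSpace E]

theorem halfspaces_ambiently_homeomorphic_general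
    (F : Set E) (huss : UniformlySelfSimilar F)
    (H₁ H₂ : Set E) (h1 : IsHalfSpace F H₁) (h2 : IsHalfSpace F H₂) :
    ∃ φ ∈ EndsHomeo F, (φ : Equiv.Perm E) '' H₁ = H₂ := by
  obtain ⟨c₁, c₁'⟩ := h1.pairHomeo_univ huss.1
  obtain ⟨c₂, c₂'⟩ := h2.pairHomeo_univ huss.1
  exact exists_mem_endsHomeo_image_eq h1.1 h2.1 (c₁.trans c₂.symm) (c₁'.trans c₂'.symm)

theorem halfspaces_ambiently_homeomorphic
    (F : Set E) (hF : IsClosed F) (huss : UniformlySelfSimilar F)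
    (H₁ H₂ : Set E) (h1 : IsHalfSpace F H₁) (h2 : IsHalfSpace F H₂) :
    ∃ φ ∈ EndsHomeo F, (φ : Equiv.Perm E) '' H₁ = H₂ :=
  halfspaces_ambiently_homeomorphic_general F huss H₁ H₂ h1 h2
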